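/- Quasi-simplicity is preserved under clock resets: let C be a subset of coordinates and for ν ∈ ℝ_{≥0}^n let ν_C be ν with coordinates in C set to 0. If g : Y → ℝ_{≥0} is quasi-simple on Y = {ν_C : ν ∈ X}, then the function h : X → ℝ_{≥0} defined by h(ν) = g(ν_C) is quasi-simple on X. -/
import Mathlib

inductive QuasiSimple {n : ℕ} : ((Fin n → ℝ) → ℝ) → Prop
  | const (e : ℕ) : QuasiSimple (fun _ => (e : ℝ))
  | coord (e : ℕ) (c : Fin n) : QuasiSimple (fun ν => (e : ℝ) - ν c)
  | convex (k : ℕ) (p : Fin k → ℝ) (f : Fin k → (Fin n → ℝ) → ℝ)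
      (hp : ∀ i, 0 ≤ p i) (hsum : ∑ i, p i = 1)
      (hf : ∀ i, QuasiSimple (f i)) :
      QuasiSimple (fun ν => ∑ i, p i * f i ν)
  | max (f g : (Fin n → ℝ) → ℝ) (hf : QuasiSimple f) (hg : QuasiSimple g) :
      QuasiSimple (fun ν => max (f ν) (g ν))
  | min (f g : (Fin n → ℝ) → ℝ) (hf : QuasiSimple f) (hg : QuasiSimple g) :
      QuasiSimple (fun ν => min (f ν) (g ν))

def QuasiSimpleOn {n : ℕ} (X : Set (Fin n → ℝ)) (f : (Fin n → ℝ) → ℝ) : Prop :=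
  ∃ g, QuasiSimple g ∧ Set.EqOn f g X

open Classical in
/-- Resetting the clocks in `C` to zero. -/
noncomputable def resetClocks {n : ℕ} (C : Set (Fin n)) (ν : Fin n → ℝ) : Fin n → ℝ :=
  fun c => if c ∈ C then 0 else ν c

lemma quasiSimple_comp_reset {n : ℕ} (C : Set (Fin n)) {g : (Fin n → ℝ) → ℝ}
    (hg : QuasiSimple g) : QuasiSimple (fun ν => g (resetClocks C ν)) := by
  induction hg with
  | const e => exact QuasiSimple.const e
  | coord e c =>
      by_cases hc : c ∈ C
      · have : (fun ν : Fin n → ℝ => (e : ℝ) - resetClocks C ν c)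
            = fun _ => (e : ℝ) := by
          funext ν; simp [resetClocks, hc]
        rw [this]; exact QuasiSimple.const e
      · have : (fun ν : Fin n → ℝ => (e : ℝ) - resetClocks C ν c)
            = fun ν => (e : ℝ) - ν c := by
          funext ν; simp [resetClocks, hc]
        rw [this]; exact QuasiSimple.coord e c
  | convex k p f hp hsum hf ih =>
      exact QuasiSimple.convex k p (fun i ν => f i (resetClocks C ν)) hp hsum ih
  | max f g hf hg ihf ihg => exact QuasiSimple.max _ _ ihf ihg
  | min f g hf hg ihf ihg => exact QuasiSimple.min _ _ ihf ihg

theorem quasiSimple_reset {n : ℕ} (X : Set (Fin n → ℝ)) (C : Set (Fin n))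
    (g : (Fin n → ℝ) → ℝ)
    (hg : QuasiSimpleOn (resetClocks C '' X) g) :
    QuasiSimpleOn X (fun ν => g (resetClocks C ν)) := by
  obtain ⟨g', hg', heq⟩ := hg
  exact ⟨fun ν => g' (resetClocks C ν), quasiSimple_comp_reset C hg',
    fun ν hν => heq ⟨ν, hν, rfl⟩⟩
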